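/- Let s and t be odd integers and n a positive integer. Then S_{s,t}(2^n) ≡ 2^{n-1} (mod 2^n), where S_{s,t}(N) = ∑_{0 ≤ i < j < N} s^i t^j. -/

import Mathlib

/-- `S2 s t N = ∑_{0 ≤ i < j < N} s^i t^j`. -/
def S2 (s t : ℤ) (N : ℕ) : ℤ := ∑ j ∈ Finset.range N, ∑ i ∈ Finset.range j, s ^ i * t ^ j

/-!
Splitting `range (2N)` into two halves gives the doubling formula
`S(2N) = S(N) (1 + (st)^N) + G_s(N) t^N G_t(N)`, with `G_u(N) = ∑_{i<N} u^i`.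
For `N = 2^(m+1)` and odd `s, t`, each geometric sum `G_u(N) = ∏_{k ≤ m} (1 + u^(2^k))` is divisible
by `2^(m+1)`, so the last term vanishes mod `2^(m+2)`; and `(st)^N ≡ 1 mod 4` while `2^m ∣ S(N)`,
so `S(N) (1 + (st)^N) ≡ 2 S(N) ≡ 2^(m+1) mod 2^(m+2)`, which is the induction step.
-/

open Finset

lemma geom_sum_add {R : Type*} [Semiring R] (x : R) (m n : ℕ) :
    ∑ i ∈ range (m + n), x ^ i = ∑ i ∈ range m, x ^ i + x ^ m * ∑ i ∈ range n, x ^ i := by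
  simp only [sum_range_add, mul_sum, pow_add]

lemma two_pow_dvd_geom_sum_two_pow {u : ℤ} (hu : Odd u) (k : ℕ) :
    2 ^ k ∣ ∑ i ∈ range (2 ^ k), u ^ i := by
  induction k with
  | zero => simp
  | succ k ih =>
    have hdouble : ∑ i ∈ range (2 ^ (k + 1)), u ^ i
        = (∑ i ∈ range (2 ^ k), u ^ i) * (u ^ 2 ^ k + 1) := by
      rw [pow_succ, mul_two, geom_sum_add]; ring
    rw [hdouble, pow_succ]
    exact mul_dvd_mul ih hu.pow.add_one.two_dvd

lemma S2_add (s t : ℤ) (m n : ℕ) :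
    S2 s t (m + n) = S2 s t m + (s * t) ^ m * S2 s t n
      + (∑ i ∈ range m, s ^ i) * t ^ m * ∑ j ∈ range n, t ^ j := by
  simp only [S2, sum_range_add, sum_add_distrib, pow_add, mul_pow, mul_sum, sum_mul]
  ring_nf

theorem S2_two_pow_succ_modEq {s t : ℤ} (hs : Odd s) (ht : Odd t) (m : ℕ) :
    S2 s t (2 ^ (m + 1)) ≡ 2 ^ m [ZMOD 2 ^ (m + 1)] := by
  induction m with
  | zero =>
    simpa [S2, sum_range_succ, Int.modEq_iff_dvd] using odd_one.sub_odd ht |>.two_dvd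
  | succ m ih =>
    set N := 2 ^ (m + 1)
    have hdouble : S2 s t (2 ^ (m + 2)) = S2 s t N * 2 + S2 s t N * ((s * t) ^ N - 1)
        + (∑ i ∈ range N, s ^ i) * t ^ N * ∑ j ∈ range N, t ^ j := by
      rw [pow_succ, mul_two, S2_add]; ring
    have hmain : S2 s t N * 2 ≡ 2 ^ (m + 1) [ZMOD 2 ^ (m + 2)] := by
      simpa [pow_succ] using ih.mul_right' (c := 2)
    have hcross : 2 ^ (m + 2) ∣ S2 s t N * ((s * t) ^ N - 1) := by
      have hS : (2 : ℤ) ^ m ∣ S2 s t N := (ih.of_dvd (pow_dvd_pow 2 m.le_succ)).dvd_iff.2 dvd_rfl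
      have hsq : (4 : ℤ) ∣ (s * t) ^ N - 1 := by
        rw [show N = 2 ^ m * 2 from pow_succ 2 m, pow_mul]
        exact (by norm_num : (4 : ℤ) ∣ 8).trans (Int.eight_dvd_sq_sub_one_of_odd (hs.mul ht).pow)
      simpa [pow_add] using mul_dvd_mul hS hsq
    have hgeom : 2 ^ (m + 2) ∣ (∑ i ∈ range N, s ^ i) * t ^ N * ∑ j ∈ range N, t ^ j := by
      have h := mul_dvd_mul (two_pow_dvd_geom_sum_two_pow hs (m + 1))
        (two_pow_dvd_geom_sum_two_pow ht (m + 1))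
      rw [← pow_add] at h
      exact (pow_dvd_pow 2 (by omega)).trans (h.trans (Dvd.intro (t ^ N) (by ring)))
    rw [hdouble]
    simpa using (hmain.add (Int.modEq_zero_iff_dvd.2 hcross)).add (Int.modEq_zero_iff_dvd.2 hgeom)

theorem stmt12_general (s t : ℤ) (hs : Odd s) (ht : Odd t) (n : ℕ) :
    S2 s t (2 ^ n) ≡ 2 ^ (n - 1) [ZMOD (2 : ℤ) ^ n] := by
  cases n with
  | zero => simpa using Int.modEq_one
  | succ m => exact S2_two_pow_succ_modEq hs ht m

theorem stmt12 (s t : ℤ) (hs : Odd s) (ht : Odd t) (n : ℕ) (hn : 0 < n) :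
    S2 s t (2 ^ n) ≡ 2 ^ (n - 1) [ZMOD (2 : ℤ) ^ n] :=
  stmt12_general s t hs ht n
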